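/- Let 0 < α ≤ 2, 0 < H < 2 and H' = H − 1/α. Then there exists a constant C > 0 (depending only on α and H) such that for every integer j ≥ 0 and every integer 1 ≤ n ≤ 2^j, writing t⁰ = (n−1)·2^{−j}, t¹ = (n−1/2)·2^{−j}, t² = n·2^{−j}, one has ∫_0^∞ | 2·(t¹ − s)_+^{H'} − (t⁰ − s)_+^{H'} − (t² − s)_+^{H'} |^α ds ≤ C·2^{−αHj}, where x_+^{H'} denotes x^{H'} for x > 0 and 0 for x ≤ 0. -/

import Mathlib

/-!
Substituting `s = t⁰ - 2^{-j} x` turns the integral, extended to all of `ℝ`, into `2^{-αHj}` times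
the fixed integral `∫ |D x|^α` with `D x = 2 (x + 1/2)₊^{H'} - x₊^{H'} - (x + 1)₊^{H'}`, so it
suffices that this integral is finite. On `x ≤ 1`, `|D|^α` is dominated by three translates of
`x₊^{αH'}`, integrable there since `αH' = αH - 1 > -1`. For `x > 1` the mean value theorem, applied
twice, gives `|D x| ≤ C x^{H'-2}`, and `α(H' - 2) = αH - 1 - 2α < -1` because `H < 2`.
-/

open MeasureTheory Filter Set
open scoped ENNReal NNReal Topology

/-- `posPow x e = x^e` for `x > 0` and `0` for `x ≤ 0` (the function `x ↦ x₊^e`). -/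
noncomputable def posPow (x e : ℝ) : ℝ := if 0 < x then x ^ e else 0

lemma posPow_of_pos {x : ℝ} (hx : 0 < x) (e : ℝ) : posPow x e = x ^ e := if_pos hx

lemma posPow_of_nonpos {x : ℝ} (hx : x ≤ 0) (e : ℝ) : posPow x e = 0 := if_neg hx.not_gt

lemma posPow_nonneg (x e : ℝ) : 0 ≤ posPow x e := by
  unfold posPow; split_ifs with hx
  exacts [Real.rpow_nonneg hx.le e, le_rfl]

lemma posPow_eq_indicator (e : ℝ) : (posPow · e) = (Ioi 0).indicator (· ^ e) := by
  ext x; simp [posPow, indicator]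

@[fun_prop]
lemma measurable_posPow (e : ℝ) : Measurable (posPow · e) := by
  rw [posPow_eq_indicator]
  exact (measurable_id.pow_const e).indicator measurableSet_Ioi

lemma posPow_rpow {α : ℝ} (hα : α ≠ 0) (x e : ℝ) : posPow x e ^ α = posPow x (e * α) := by
  rcases lt_or_ge 0 x with hx | hx
  · rw [posPow_of_pos hx, posPow_of_pos hx, Real.rpow_mul hx.le]
  · rw [posPow_of_nonpos hx, posPow_of_nonpos hx, Real.zero_rpow hα]

lemma posPow_mul_left {c : ℝ} (hc : 0 < c) (x e : ℝ) : posPow (c * x) e = c ^ e * posPow x e := by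
  rcases lt_or_ge 0 x with hx | hx
  · rw [posPow_of_pos hx, posPow_of_pos (mul_pos hc hx), Real.mul_rpow hc.le hx.le]
  · rw [posPow_of_nonpos hx, posPow_of_nonpos (mul_nonpos_of_nonneg_of_nonpos hc.le hx), mul_zero]

lemma integrableOn_posPow_Iic {p : ℝ} (hp : -1 < p) (b : ℝ) :
    IntegrableOn (posPow · p) (Iic b) := by
  rw [posPow_eq_indicator, integrableOn_indicator_iff measurableSet_Ioi, Ioi_inter_Iic]
  exact (intervalIntegral.intervalIntegrable_rpow' hp).1

lemma integrableOn_posPow_add_Iic {p : ℝ} (hp : -1 < p) (c b : ℝ) :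
    IntegrableOn (fun x ↦ posPow (x + c) p) (Iic b) := by
  have h := (measurePreserving_add_right volume c).integrableOn_comp_preimage
    (measurableEmbedding_addRight c) (f := (posPow · p)) (s := Iic (b + c))
  rw [preimage_add_const_Iic, add_sub_cancel_right] at h
  exact h.2 (integrableOn_posPow_Iic hp _)

noncomputable def posPowSecondDiff (e x : ℝ) : ℝ :=
  2 * posPow (x + 1/2) e - posPow x e - posPow (x + 1) e

lemma two_mul_posPow_sub_sub_eq {h : ℝ} (hh : 0 < h) (t s e : ℝ) :
    2 * posPow (t + h / 2 - s) e - posPow (t - s) e - posPow (t + h - s) e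
      = h ^ e * posPowSecondDiff e ((t - s) / h) := by
  set x := (t - s) / h
  have hx : t - s = h * x := (mul_div_cancel₀ (t - s) hh.ne').symm
  rw [posPowSecondDiff, hx, show t + h / 2 - s = h * (x + 1 / 2) by linarith,
    show t + h - s = h * (x + 1) by linarith, posPow_mul_left hh, posPow_mul_left hh,
    posPow_mul_left hh]
  ring

lemma abs_two_mul_sub_sub_le {f f' f'' : ℝ → ℝ} {a δ M : ℝ} (hδ : 0 ≤ δ)
    (hf : ∀ x ∈ Icc a (a + 2 * δ), HasDerivAt f (f' x) x)
    (hf' : ∀ x ∈ Icc a (a + 2 * δ), HasDerivAt f' (f'' x) x)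
    (hM : ∀ x ∈ Icc a (a + 2 * δ), |f'' x| ≤ M) :
    |2 * f (a + δ) - f a - f (a + 2 * δ)| ≤ M * δ ^ 2 := by
  -- The second difference is `φ a - φ (a + δ)` for `φ y = f (y + δ) - f y`, and `|φ'| ≤ M δ`.
  have hI : ∀ y ∈ Icc a (a + δ), Icc y (y + δ) ⊆ Icc a (a + 2 * δ) := fun y hy ↦
    Icc_subset_Icc hy.1 (by linarith [hy.2])
  have hφ' : ∀ y ∈ Icc a (a + δ), |f' (y + δ) - f' y| ≤ M * δ := fun y hy ↦ by
    simpa [abs_of_nonneg hδ] using Convex.norm_image_sub_le_of_norm_hasDerivWithin_le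
      (fun x hx ↦ (hf' x (hI y hy hx)).hasDerivWithinAt) (fun x hx ↦ hM x (hI y hy hx))
      (convex_Icc y (y + δ)) (left_mem_Icc.2 (by linarith)) (right_mem_Icc.2 (by linarith))
  have hφ := Convex.norm_image_sub_le_of_norm_hasDerivWithin_le (f := fun y ↦ f (y + δ) - f y)
    (fun y hy ↦ (((hf _ (hI y hy ⟨by linarith, le_rfl⟩)).comp_add_const y δ).sub
      (hf y (hI y hy ⟨le_rfl, by linarith⟩))).hasDerivWithinAt) hφ'
    (convex_Icc a (a + δ)) (left_mem_Icc.2 (by linarith)) (right_mem_Icc.2 (by linarith))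
  rw [Real.norm_eq_abs, Real.norm_eq_abs, add_sub_cancel_left, abs_of_nonneg hδ,
    ← abs_neg] at hφ
  calc |2 * f (a + δ) - f a - f (a + 2 * δ)|
      = |-(f (a + δ + δ) - f (a + δ) - (f (a + δ) - f a))| := by ring_nf
    _ ≤ M * δ ^ 2 := by rw [sq, ← mul_assoc]; exact hφ

lemma abs_posPowSecondDiff_le {e x : ℝ} (he : e ≤ 2) (hx : 0 < x) :
    |posPowSecondDiff e x| ≤ |e * (e - 1)| * x ^ (e - 2) / 4 := by
  have hpos : ∀ y ∈ Icc x (x + 2 * (1 / 2)), 0 < y := fun y hy ↦ hx.trans_le hy.1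
  have h := abs_two_mul_sub_sub_le (f := (· ^ e)) (f' := fun y ↦ e * y ^ (e - 1))
    (f'' := fun y ↦ e * ((e - 1) * y ^ (e - 1 - 1))) (M := |e * (e - 1)| * x ^ (e - 2))
    (by norm_num : (0 : ℝ) ≤ 1 / 2)
    (fun y hy ↦ Real.hasDerivAt_rpow_const (Or.inl (hpos y hy).ne'))
    (fun y hy ↦ (Real.hasDerivAt_rpow_const (Or.inl (hpos y hy).ne')).const_mul e)
    (fun y hy ↦ by
      rw [← mul_assoc, abs_mul, abs_of_nonneg (Real.rpow_nonneg (hpos y hy).le _),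
        sub_sub, one_add_one_eq_two]
      exact mul_le_mul_of_nonneg_left
        (Real.rpow_le_rpow_of_nonpos hx hy.1 (by linarith)) (abs_nonneg _))
  rw [posPowSecondDiff, posPow_of_pos hx, posPow_of_pos (by linarith),
    posPow_of_pos (by linarith)]
  rw [show x + 2 * (1 / 2) = x + 1 by ring] at h
  linarith

lemma abs_two_mul_sub_sub_rpow_le {a b c α : ℝ} (ha : 0 ≤ a) (hb : 0 ≤ b) (hc : 0 ≤ c)
    (hα : 0 ≤ α) : |2 * a - b - c| ^ α ≤ 4 ^ α * (a ^ α + b ^ α + c ^ α) := by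
  have hmax : |2 * a - b - c| ≤ 4 * max a (max b c) := by
    rw [abs_le]; constructor <;> linarith [le_max_left a (max b c),
      le_max_right a (max b c), le_max_left b c, le_max_right b c]
  have hsum : max a (max b c) ^ α ≤ a ^ α + b ^ α + c ^ α := by
    have := Real.rpow_nonneg ha α; have := Real.rpow_nonneg hb α
    have := Real.rpow_nonneg hc α
    rcases max_choice a (max b c) with h | h <;> rw [h]
    · linarith
    · rcases max_choice b c with h' | h' <;> rw [h'] <;> linarith
  calc |2 * a - b - c| ^ α ≤ (4 * max a (max b c)) ^ α :=
        Real.rpow_le_rpow (abs_nonneg _) hmax hα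
    _ = 4 ^ α * max a (max b c) ^ α := Real.mul_rpow (by norm_num) (by positivity)
    _ ≤ 4 ^ α * (a ^ α + b ^ α + c ^ α) := by gcongr

lemma integrable_abs_posPowSecondDiff_rpow {e α : ℝ} (hα : 0 < α) (hp : -1 < e * α)
    (hq : (e - 2) * α < -1) : Integrable (fun x ↦ |posPowSecondDiff e x| ^ α) := by
  have hmeas : Measurable (fun x ↦ |posPowSecondDiff e x| ^ α) := by
    unfold posPowSecondDiff; fun_prop
  have hnorm : ∀ x, ‖|posPowSecondDiff e x| ^ α‖ = |posPowSecondDiff e x| ^ α := fun x ↦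
    Real.norm_of_nonneg (Real.rpow_nonneg (abs_nonneg _) _)
  rw [← integrableOn_univ, ← Iic_union_Ioi (a := (1 : ℝ))]
  refine IntegrableOn.union ?_ ?_
  · refine Integrable.mono' (g := fun x ↦ 4 ^ α * (posPow (x + 1 / 2) (e * α)
      + posPow (x + 0) (e * α) + posPow (x + 1) (e * α))) ?_ hmeas.aestronglyMeasurable
      (ae_of_all _ fun x ↦ ?_)
    · exact (((integrableOn_posPow_add_Iic hp _ _).add (integrableOn_posPow_add_Iic hp _ _)).add
        (integrableOn_posPow_add_Iic hp _ _)).const_mul _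
    · simp only [hnorm, add_zero, ← posPow_rpow hα.ne']
      exact abs_two_mul_sub_sub_rpow_le (posPow_nonneg _ _) (posPow_nonneg _ _)
        (posPow_nonneg _ _) hα.le
  · refine Integrable.mono' (g := fun x ↦ (|e * (e - 1)| / 4) ^ α * x ^ ((e - 2) * α))
      ((integrableOn_Ioi_rpow_of_lt hq one_pos).const_mul _) hmeas.aestronglyMeasurable
      (ae_restrict_of_forall_mem measurableSet_Ioi fun x (hx : 1 < x) ↦ ?_)
    have hx0 : 0 < x := one_pos.trans hx
    have he : e ≤ 2 := by nlinarith
    calc ‖|posPowSecondDiff e x| ^ α‖ ≤ (|e * (e - 1)| * x ^ (e - 2) / 4) ^ α := by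
          rw [hnorm]
          exact Real.rpow_le_rpow (abs_nonneg _) (abs_posPowSecondDiff_le he hx0) hα.le
      _ = (|e * (e - 1)| / 4) ^ α * x ^ ((e - 2) * α) := by
          rw [mul_div_right_comm, Real.mul_rpow (by positivity) (by positivity),
            ← Real.rpow_mul hx0.le]

lemma lintegral_abs_two_mul_posPow_sub_sub_rpow {e α : ℝ} (hα : 0 < α) (hp : -1 < e * α)
    (hq : (e - 2) * α < -1) (t : ℝ) {h : ℝ} (hh : 0 < h) :
    ∫⁻ s, ENNReal.ofReal
        (|2 * posPow (t + h / 2 - s) e - posPow (t - s) e - posPow (t + h - s) e| ^ α)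
      = ENNReal.ofReal (h ^ (e * α + 1) * ∫ x, |posPowSecondDiff e x| ^ α) := by
  set G := fun x ↦ |posPowSecondDiff e x| ^ α
  have hF : ∀ s, |2 * posPow (t + h / 2 - s) e - posPow (t - s) e - posPow (t + h - s) e| ^ α
      = h ^ (e * α) * G ((t - s) / h) := fun s ↦ by
    rw [two_mul_posPow_sub_sub_eq hh, abs_mul, Real.mul_rpow (abs_nonneg _) (abs_nonneg _),
      abs_of_pos (Real.rpow_pos_of_pos hh _), ← Real.rpow_mul hh.le]
  have hG : Integrable G := integrable_abs_posPowSecondDiff_rpow hα hp hq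
  simp_rw [hF]
  rw [← ofReal_integral_eq_lintegral_ofReal (((hG.comp_div hh.ne').comp_sub_left t).const_mul _)
      (ae_of_all _ fun s ↦ by positivity),
    integral_const_mul, integral_sub_left_eq_self (fun y ↦ G (y / h)), Measure.integral_comp_div,
    abs_of_pos hh, smul_eq_mul, Real.rpow_add_one hh.ne', mul_assoc]

theorem schauder_scale_estimate_RL_general (α H : ℝ)
    (hα : 0 < α) (hH0 : 0 < H) (hH2 : H < 2) :
    ∃ C : ℝ, 0 < C ∧ ∀ j n : ℕ, 1 ≤ n → n ≤ 2 ^ j →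
      ∫⁻ s in Set.Ioi (0:ℝ),
        ENNReal.ofReal
          (|2 * posPow (((n : ℝ) - 1/2) * 2 ^ (-(j : ℝ)) - s) (H - 1/α)
              - posPow (((n : ℝ) - 1) * 2 ^ (-(j : ℝ)) - s) (H - 1/α)
              - posPow ((n : ℝ) * 2 ^ (-(j : ℝ)) - s) (H - 1/α)| ^ α)
        ≤ ENNReal.ofReal (C * 2 ^ (-(α * H * j))) := by
  have hexp : (H - 1 / α) * α + 1 = α * H := by field_simp; ring
  have hp : -1 < (H - 1 / α) * α := by nlinarith
  have hq : (H - 1 / α - 2) * α < -1 := by nlinarith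
  set I := ∫ x, |posPowSecondDiff (H - 1 / α) x| ^ α
  have hI : 0 ≤ I := integral_nonneg fun x ↦ Real.rpow_nonneg (abs_nonneg _) _
  refine ⟨I + 1, by positivity, fun j n _ _ ↦ ?_⟩
  set h : ℝ := 2 ^ (-(j : ℝ))
  have hh : 0 < h := Real.rpow_pos_of_pos two_pos _
  have hscale : h ^ (α * H) = 2 ^ (-(α * H * j)) := by
    rw [← Real.rpow_mul zero_le_two]; ring_nf
  calc _ = ∫⁻ s in Ioi 0, ENNReal.ofReal
          (|2 * posPow ((n - 1) * h + h / 2 - s) (H - 1 / α) - posPow ((n - 1) * h - s) (H - 1 / α)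
            - posPow ((n - 1) * h + h - s) (H - 1 / α)| ^ α) := by ring_nf
    _ ≤ ∫⁻ s, ENNReal.ofReal
          (|2 * posPow ((n - 1) * h + h / 2 - s) (H - 1 / α) - posPow ((n - 1) * h - s) (H - 1 / α)
            - posPow ((n - 1) * h + h - s) (H - 1 / α)| ^ α) := setLIntegral_le_lintegral _ _
    _ = ENNReal.ofReal (h ^ (α * H) * I) := by
      rw [lintegral_abs_two_mul_posPow_sub_sub_rpow hα hp hq _ hh, hexp]
    _ ≤ ENNReal.ofReal ((I + 1) * 2 ^ (-(α * H * j))) := by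
      rw [hscale, mul_comm]
      gcongr
      linarith

/-- Key estimate on the scale factors of the Schauder coefficients of the α-stable
Riemann–Liouville process: with `H' = H - 1/α`, `t⁰ = (n-1)2^{-j}`, `t¹ = (n-1/2)2^{-j}`,
`t² = n 2^{-j}`, one has
`∫_0^∞ |2(t¹-s)₊^{H'} - (t⁰-s)₊^{H'} - (t²-s)₊^{H'}|^α ds ≤ C 2^{-αHj}`. -/
theorem schauder_scale_estimate_RL (α H : ℝ)
    (hα : 0 < α) (hα2 : α ≤ 2) (hH0 : 0 < H) (hH2 : H < 2) :
    ∃ C : ℝ, 0 < C ∧ ∀ j n : ℕ, 1 ≤ n → n ≤ 2 ^ j →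
      ∫⁻ s in Set.Ioi (0:ℝ),
        ENNReal.ofReal
          (|2 * posPow (((n : ℝ) - 1/2) * 2 ^ (-(j : ℝ)) - s) (H - 1/α)
              - posPow (((n : ℝ) - 1) * 2 ^ (-(j : ℝ)) - s) (H - 1/α)
              - posPow ((n : ℝ) * 2 ^ (-(j : ℝ)) - s) (H - 1/α)| ^ α)
        ≤ ENNReal.ofReal (C * 2 ^ (-(α * H * j))) :=
  schauder_scale_estimate_RL_general α H hα hH0 hH2
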